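/- Let G = (V,E) be a connected simple graph with at least two vertices. Then ε(G) ≤ (1/2)·∑_{v∈V} ε(G \ v), where G \ v is the induced subgraph on V \ {v}. -/

import Mathlib

/-!
Fix an acyclic orientation `O` of `G`, with `e(O)` linear extensions. Sorting these by the vertex
in the first position, and again by the vertex in the last position, gives
`2 e(O) = ∑ v, (#{f | v is first in f} + #{f | v is last in f})`.
A vertex `v` with a neighbour `w` is never first in one extension and last in another, since the
edge `vw` orders `v` and `w` the same way in all of them. Deleting `v` from the extensions in which
it has a fixed position is injective into the linear extensions of `O` restricted to `G \ v`, so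
each summand is at most `ε(G \ v)`.
-/

/-- An orientation of a simple graph `G`: a choice of direction for each edge. -/
structure GraphOrientation {V : Type*} (G : SimpleGraph V) where
  dir : V → V → Prop
  dir_adj : ∀ u v, dir u v → G.Adj u v
  adj_dir : ∀ u v, G.Adj u v → dir u v ∨ dir v u
  asymm : ∀ u v, dir u v → ¬ dir v u

/-- An orientation is acyclic if there is no directed cycle. -/
def GraphOrientation.Acyclic {V : Type*} {G : SimpleGraph V} (O : GraphOrientation G) : Prop :=
  ∀ v, ¬ Relation.TransGen O.dir v v

/-- Linear extensions of the poset induced (by reachability) by an orientation: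
bijective labelings of the vertices by `Fin (card V)` compatible with directed paths. -/
def GraphOrientation.LinExt {V : Type*} [Fintype V] {G : SimpleGraph V} (O : GraphOrientation G) :
    Type _ :=
  {f : V ≃ Fin (Fintype.card V) // ∀ u v, Relation.TransGen O.dir u v → f u < f v}

/-- The number of linear extensions of the poset induced by an orientation. -/
noncomputable def GraphOrientation.numLinExt {V : Type*} [Fintype V] {G : SimpleGraph V}
    (O : GraphOrientation G) : ℕ :=
  Nat.card O.LinExt


/-- The maximal number of linear extensions of a poset induced by an acyclic
orientation of `G`, denoted `ε(G)` in the paper. -/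
noncomputable def maxLinExt {V : Type*} [Fintype V] (G : SimpleGraph V) : ℕ :=
  sSup {k | ∃ O : GraphOrientation G, O.Acyclic ∧ k = O.numLinExt}

namespace Equiv

variable {V : Type*} {m : ℕ}

def deleteFin (e : V ≃ Fin (m + 1)) (v : V) : {x : V | x ≠ v} ≃ Fin m :=
  (e.subtypeEquiv (q := (· ≠ e v)) fun _ => e.injective.ne_iff.symm).trans
    (finSuccAboveOrderIso (e v)).symm.toEquiv

theorem succAbove_deleteFin (e : V ≃ Fin (m + 1)) (v : V) (x : {x : V | x ≠ v}) :
    (e v).succAbove (e.deleteFin v x) = e x :=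
  congrArg Subtype.val ((finSuccAboveOrderIso (e v)).apply_symm_apply ⟨e x, _⟩)

theorem deleteFin_lt_deleteFin_iff (e : V ≃ Fin (m + 1)) (v : V) (x y : {x : V | x ≠ v}) :
    e.deleteFin v x < e.deleteFin v y ↔ e x < e y := by
  rw [← Fin.succAbove_lt_succAbove_iff (p := e v), succAbove_deleteFin, succAbove_deleteFin]

theorem eq_of_deleteFin_eq {e₁ e₂ : V ≃ Fin (m + 1)} {v : V} (hv : e₁ v = e₂ v)
    (h : e₁.deleteFin v = e₂.deleteFin v) : e₁ = e₂ := by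
  ext x
  by_cases hx : x = v
  · rw [hx, hv]
  · rw [← succAbove_deleteFin e₁ v ⟨x, hx⟩, ← succAbove_deleteFin e₂ v ⟨x, hx⟩, h, hv]

end Equiv

theorem Fintype.card_eq_card_ne_add_one {V : Type*} [Fintype V] [DecidableEq V] (v : V) :
    Fintype.card V = Fintype.card {x : V | x ≠ v} + 1 := by
  have := Fintype.card_pos_iff.2 ⟨v⟩
  rw [Set.card_ne_eq]
  omega

namespace GraphOrientation

variable {V : Type*} {G : SimpleGraph V}

def induce (O : GraphOrientation G) (s : Set V) : GraphOrientation (G.induce s) where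
  dir a b := O.dir a b
  dir_adj a b h := O.dir_adj a b h
  adj_dir a b h := O.adj_dir a b h
  asymm a b h := O.asymm a b h

theorem Acyclic.induce {O : GraphOrientation G} (hO : O.Acyclic) (s : Set V) :
    (O.induce s).Acyclic :=
  fun a ha => hO a (ha.lift Subtype.val fun _ _ h => h)

variable [Fintype V]

instance (O : GraphOrientation G) : Finite O.LinExt :=
  Subtype.finite

theorem bddAbove_numLinExt (G : SimpleGraph V) :
    BddAbove {k | ∃ O : GraphOrientation G, O.Acyclic ∧ k = O.numLinExt} := by
  refine ⟨Nat.card (V ≃ Fin (Fintype.card V)), ?_⟩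
  rintro _ ⟨O, -, rfl⟩
  exact Nat.card_le_card_of_injective _ Subtype.val_injective

theorem numLinExt_le_maxLinExt {O : GraphOrientation G} (hO : O.Acyclic) :
    O.numLinExt ≤ maxLinExt G :=
  le_csSup (bddAbove_numLinExt G) ⟨O, hO, rfl⟩

theorem numLinExt_eq_sum_card_fiber (O : GraphOrientation G) (c : Fin (Fintype.card V)) :
    O.numLinExt = ∑ v : V, Nat.card {f : O.LinExt // f.1 v = c} := by
  rw [numLinExt, ← Nat.card_congr (Equiv.sigmaFiberEquiv fun f : O.LinExt => f.1.symm c),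
    Nat.card_sigma]
  refine Finset.sum_congr rfl fun v _ => ?_
  exact Nat.card_congr (Equiv.subtypeEquivRight fun f => by rw [Equiv.symm_apply_eq, eq_comm])

namespace LinExt

variable {O : GraphOrientation G}

theorem not_isBot_of_dir (f : O.LinExt) {u v : V} (h : O.dir u v) : ¬ IsBot (f.1 v) :=
  fun hv => (hv (f.1 u)).not_gt (f.2 u v (.single h))

theorem not_isTop_of_dir (f : O.LinExt) {u v : V} (h : O.dir u v) : ¬ IsTop (f.1 u) :=
  fun hu => (hu (f.1 v)).not_gt (f.2 u v (.single h))

variable [DecidableEq V]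

def restrict (f : O.LinExt) (v : V) : (O.induce {x | x ≠ v}).LinExt :=
  ⟨(f.1.trans (finCongr (Fintype.card_eq_card_ne_add_one v))).deleteFin v, fun x y hxy => by
    rw [Equiv.deleteFin_lt_deleteFin_iff]
    exact f.2 x y (hxy.lift Subtype.val fun _ _ h => h)⟩

theorem eq_of_restrict_eq {f g : O.LinExt} {v : V} (hv : f.1 v = g.1 v)
    (h : f.restrict v = g.restrict v) : f = g := by
  have := Equiv.eq_of_deleteFin_eq (by simp [hv]) (congrArg Subtype.val h)
  exact Subtype.ext <| Equiv.ext fun x =>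
    Fin.ext (by simpa using congrArg (fun e => (e x : ℕ)) this)

end LinExt

variable [DecidableEq V]

theorem card_fiber_le_numLinExt_induce (O : GraphOrientation G) (v : V)
    (c : Fin (Fintype.card V)) :
    Nat.card {f : O.LinExt // f.1 v = c} ≤ (O.induce {x | x ≠ v}).numLinExt :=
  Nat.card_le_card_of_injective (fun f => f.1.restrict v) fun f g h =>
    Subtype.ext (LinExt.eq_of_restrict_eq (f.2.trans g.2.symm) h)


theorem card_fiber_add_card_fiber_le {O : GraphOrientation G} (hO : O.Acyclic) {v w : V}
    (hvw : G.Adj v w) {c d : Fin (Fintype.card V)} (hc : IsBot c) (hd : IsTop d) :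
    Nat.card {f : O.LinExt // f.1 v = c} + Nat.card {f : O.LinExt // f.1 v = d} ≤
      maxLinExt (G.induce {x | x ≠ v}) := by
  have hempty : IsEmpty {f : O.LinExt // f.1 v = c} ∨ IsEmpty {f : O.LinExt // f.1 v = d} := by
    rcases O.adj_dir v w hvw with h | h
    · exact .inr ⟨fun f => f.1.not_isTop_of_dir h (by rwa [f.2])⟩
    · exact .inl ⟨fun f => f.1.not_isBot_of_dir h (by rwa [f.2])⟩
  have hle := fun e => (O.card_fiber_le_numLinExt_induce v e).trans
    (numLinExt_le_maxLinExt (hO.induce {x | x ≠ v}))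
  rcases hempty with h | h
  · simpa [Nat.card_of_isEmpty] using hle d
  · simpa [Nat.card_of_isEmpty] using hle c

theorem two_mul_numLinExt_le [Nonempty V] {O : GraphOrientation G} (hO : O.Acyclic)
    (hG : ∀ v, ∃ w, G.Adj v w) :
    2 * O.numLinExt ≤ ∑ v : V, maxLinExt (G.induce {x | x ≠ v}) := by
  have hpos : 0 < Fintype.card V := Fintype.card_pos
  let c : Fin (Fintype.card V) := ⟨0, hpos⟩
  let d : Fin (Fintype.card V) := ⟨Fintype.card V - 1, by omega⟩
  have hc : IsBot c := fun x => Nat.zero_le x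
  have hd : IsTop d := fun x => Nat.le_sub_one_of_lt x.isLt
  calc 2 * O.numLinExt
      = ∑ v : V,
          (Nat.card {f : O.LinExt // f.1 v = c} + Nat.card {f : O.LinExt // f.1 v = d}) := by
        rw [Finset.sum_add_distrib, ← numLinExt_eq_sum_card_fiber, ← numLinExt_eq_sum_card_fiber,
          two_mul]
    _ ≤ ∑ v : V, maxLinExt (G.induce {x | x ≠ v}) := Finset.sum_le_sum fun v _ =>
        card_fiber_add_card_fiber_le hO (hG v).choose_spec hc hd

end GraphOrientation

theorem two_mul_maxLinExt_le {V : Type*} [Fintype V] [DecidableEq V] [Nonempty V]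
    {G : SimpleGraph V} (hG : ∀ v, ∃ w, G.Adj v w) :
    2 * maxLinExt G ≤ ∑ v : V, maxLinExt (G.induce {x | x ≠ v}) := by
  suffices maxLinExt G ≤ (∑ v : V, maxLinExt (G.induce {x | x ≠ v})) / 2 by omega
  refine csSup_le' ?_
  rintro _ ⟨O, hO, rfl⟩
  exact (Nat.le_div_iff_mul_le two_pos).2 (by rw [mul_comm]; exact O.two_mul_numLinExt_le hO hG)

theorem stmt_15 {V : Type*} [Fintype V] [DecidableEq V] (G : SimpleGraph V)
    (hconn : G.Connected) (hcard : 2 ≤ Fintype.card V) :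
    (maxLinExt G : ℝ) ≤
      (1 / 2) * ∑ v : V, (maxLinExt (G.induce {x : V | x ≠ v}) : ℝ) := by
  have : Nontrivial V := Fintype.one_lt_card_iff_nontrivial.1 hcard
  have hG : ∀ v, ∃ w, G.Adj v w := hconn.preconnected.exists_adj_of_nontrivial
  have h : (2 * maxLinExt G : ℝ) ≤ ∑ v : V, (maxLinExt (G.induce {x : V | x ≠ v}) : ℝ) := by
    exact_mod_cast two_mul_maxLinExt_le hG
  linarith
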